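/- For I·I' ≠ (0,…,0), the (I,I')-entry of H̃ = ᵗP_m H P_m^∨ equals (αβ + (-1)^{|I·I'|} ∏_k γ_k^{i_k i'_k}) / ((α - ∏_k γ_k)(β-1)) · ∏_{k=1}^m (-γ_k)^{i'_k(1-i_k)} (1-γ_k)^{(1-i_k)(1-i'_k)}, where I·I' = (i_1 i'_1, …, i_m i'_m); for I·I' = (0,…,0) it equals ∏_{k=1}^m (-γ_k)^{i'_k}(1-γ_k)^{1-i_k-i'_k} · (α-1)/(α - ∏_k γ_k). In particular every entry of H̃ is a rational function whose denominator does not involve any factor γ_k - 1. -/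

import Mathlib

open Matrix

/-- The diagonal entry `H_{I,I}` of the intersection matrix for Lauricella's `F_C`. -/
noncomputable def Hentry (m : ℕ) (α β : ℂ) (γ : Fin m → ℂ) (I : Fin m → Fin 2) : ℂ :=
  (∏ k, (-1 : ℂ) ^ (I k : ℕ) * γ k ^ (1 - (I k : ℕ)) / (γ k - 1)) *
    ((α - ∏ k, γ k ^ (I k : ℕ)) * (β - ∏ k, γ k ^ (I k : ℕ)) /
      ((α - ∏ k, γ k) * (β - 1)))

/-- The Kronecker product `P_m = Q_1 ⊗ ⋯ ⊗ Q_m` with `Q_k = [[1-γ_k,1],[0,1]]`. -/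
def Pmat (m : ℕ) (γ : Fin m → ℂ) : Matrix (Fin m → Fin 2) (Fin m → Fin 2) ℂ :=
  Matrix.of fun I J => ∏ k, (!![1 - γ k, 1; 0, 1] : Matrix (Fin 2) (Fin 2) ℂ) (I k) (J k)

/-!
Expanding `(α - x)(β - x) = αβ - (α + β)x + x²` with `x = ∏ k, γ_k ^ j_k` writes `H` as a
combination of three diagonal matrices whose entries are products over `k`. As `P_m` and `P_m^∨`
are Kronecker products, the corresponding three summands of `H̃` are Kronecker products of the
`2 × 2` blocks `ᵗQ_k · diag(w_k(j) γ_k^{js}) · Q_k^∨` (`s = 0, 1, 2`), where `w_k(j)` is the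
`k`-th factor of the product in `Hentry`. Each block equals
`[[1 - γ, -γ], [1, (γ - γ^s)/(γ - 1)]]`, so the pole at `γ = 1` cancels; the three blocks differ
only in their `(1,1)` entry, which is `1`, `0`, `-γ`, and this produces the two cases.
-/

namespace Matrix

variable {ι m n p R : Type*} [Fintype ι]

def piKronecker [CommMonoid R] (A : ι → Matrix m n R) : Matrix (ι → m) (ι → n) R :=
  of fun I J => ∏ k, A k (I k) (J k)

theorem piKronecker_apply [CommMonoid R] (A : ι → Matrix m n R) (I : ι → m) (J : ι → n) :
    piKronecker A I J = ∏ k, A k (I k) (J k) := rfl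

theorem piKronecker_transpose [CommMonoid R] (A : ι → Matrix m n R) :
    (piKronecker A)ᵀ = piKronecker fun k => (A k)ᵀ := rfl

theorem piKronecker_mul [CommSemiring R] [DecidableEq ι] [Fintype n]
    (A : ι → Matrix m n R) (B : ι → Matrix n p R) :
    piKronecker A * piKronecker B = piKronecker fun k => A k * B k := by
  ext I J
  simp only [mul_apply, piKronecker_apply, Fintype.prod_sum, Finset.prod_mul_distrib]

theorem diagonal_prod_eq_piKronecker [CommSemiring R] [DecidableEq ι] [DecidableEq m]
    (c : ι → m → R) :
    diagonal (fun J => ∏ k, c k (J k)) = piKronecker fun k => diagonal (c k) := by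
  ext I J
  rw [piKronecker_apply]
  by_cases h : I = J
  · subst h
    simp
  · obtain ⟨k, hk⟩ := Function.ne_iff.mp h
    rw [diagonal_apply_ne _ h,
      Finset.prod_eq_zero (Finset.mem_univ k) (diagonal_apply_ne (c k) hk)]

theorem piKronecker_transpose_mul_diagonal_mul [CommSemiring R] [DecidableEq ι] [DecidableEq m]
    [Fintype m] (A : ι → Matrix m n R) (c : ι → m → R) (B : ι → Matrix m p R) :
    (piKronecker A)ᵀ * diagonal (fun J : ι → m => ∏ k, c k (J k)) * piKronecker B =
      piKronecker fun k => (A k)ᵀ * diagonal (c k) * B k := by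
  rw [piKronecker_transpose, diagonal_prod_eq_piKronecker, piKronecker_mul, piKronecker_mul]

end Matrix

theorem Pmat_eq_piKronecker (m : ℕ) (γ : Fin m → ℂ) :
    Pmat m γ = piKronecker fun k => !![1 - γ k, 1; 0, 1] := rfl

noncomputable def hentryWeight (g : ℂ) (s : ℕ) (j : Fin 2) : ℂ :=
  (-1 : ℂ) ^ (j : ℕ) * g ^ (1 - (j : ℕ)) / (g - 1) * g ^ ((j : ℕ) * s)

theorem Hentry_eq (m : ℕ) (α β : ℂ) (γ : Fin m → ℂ) (J : Fin m → Fin 2) :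
    Hentry m α β γ J =
      (α * β * ∏ k, hentryWeight (γ k) 0 (J k) - (α + β) * ∏ k, hentryWeight (γ k) 1 (J k)
        + ∏ k, hentryWeight (γ k) 2 (J k)) / ((α - ∏ k, γ k) * (β - 1)) := by
  simp only [Hentry, hentryWeight, Finset.prod_mul_distrib, pow_mul, Finset.prod_pow]
  ring

noncomputable def htildeBlock (g : ℂ) (s : ℕ) : Matrix (Fin 2) (Fin 2) ℂ :=
  (!![1 - g, 1; 0, 1])ᵀ * diagonal (hentryWeight g s) * !![1 - g⁻¹, 1; 0, 1]

section htildeBlock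

variable {g : ℂ} (hg0 : g ≠ 0) (hg1 : g ≠ 1)
include hg0 hg1

theorem htildeBlock_eq (s : ℕ) :
    htildeBlock g s = !![1 - g, -g; 1, (g - g ^ s) / (g - 1)] := by
  have : g - 1 ≠ 0 := sub_ne_zero.mpr hg1
  ext i j
  fin_cases i <;> fin_cases j <;>
    simp [htildeBlock, hentryWeight, mul_apply, Fin.sum_univ_two] <;> field_simp <;> ring

theorem htildeBlock_apply_of_mul_eq_zero (s : ℕ) {i i' : Fin 2} (h : (i : ℕ) * (i' : ℕ) = 0) :
    htildeBlock g s i i' = (-g) ^ (i' : ℕ) * (1 - g) ^ (1 - (i : ℕ) - (i' : ℕ)) := by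
  rw [htildeBlock_eq hg0 hg1]
  fin_cases i <;> fin_cases i' <;> simp_all

theorem htildeBlock_zero_apply (i i' : Fin 2) :
    htildeBlock g 0 i i' =
      (-g) ^ ((i' : ℕ) * (1 - (i : ℕ))) * (1 - g) ^ ((1 - (i : ℕ)) * (1 - (i' : ℕ))) := by
  have : g - 1 ≠ 0 := sub_ne_zero.mpr hg1
  rw [htildeBlock_eq hg0 hg1]
  fin_cases i <;> fin_cases i' <;> simp [this]

theorem htildeBlock_one_apply_one_one : htildeBlock g 1 1 1 = 0 := by
  simp [htildeBlock_eq hg0 hg1]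

theorem htildeBlock_two_apply (i i' : Fin 2) :
    htildeBlock g 2 i i' =
      (-1) ^ ((i : ℕ) * (i' : ℕ)) * g ^ ((i : ℕ) * (i' : ℕ)) * htildeBlock g 0 i i' := by
  have : g - 1 ≠ 0 := sub_ne_zero.mpr hg1
  simp only [htildeBlock_eq hg0 hg1]
  fin_cases i <;> fin_cases i' <;> simp [this]
  field_simp
  ring

end htildeBlock

theorem Htilde_apply (m : ℕ) (α β : ℂ) (γ : Fin m → ℂ) (I I' : Fin m → Fin 2) :
    ((Pmat m γ)ᵀ * diagonal (Hentry m α β γ) * Pmat m (fun k => (γ k)⁻¹)) I I' =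
      (α * β * ∏ k, htildeBlock (γ k) 0 (I k) (I' k)
        - (α + β) * ∏ k, htildeBlock (γ k) 1 (I k) (I' k)
        + ∏ k, htildeBlock (γ k) 2 (I k) (I' k)) / ((α - ∏ k, γ k) * (β - 1)) := by
  have hH : diagonal (Hentry m α β γ) = ((α - ∏ k, γ k) * (β - 1))⁻¹ •
      ((α * β) • diagonal (fun J => ∏ k, hentryWeight (γ k) 0 (J k))
        - (α + β) • diagonal (fun J => ∏ k, hentryWeight (γ k) 1 (J k))
        + diagonal (fun J => ∏ k, hentryWeight (γ k) 2 (J k))) := by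
    simp only [← diagonal_smul, diagonal_sub, diagonal_add]
    congr 1
    ext J
    simp only [Hentry_eq, Pi.smul_apply, smul_eq_mul]
    ring
  simp only [hH, Matrix.mul_smul, Matrix.smul_mul, Matrix.mul_add, Matrix.add_mul, Matrix.mul_sub,
    Matrix.sub_mul, Pmat_eq_piKronecker, piKronecker_transpose_mul_diagonal_mul]
  simp only [Matrix.smul_apply, Matrix.add_apply, Matrix.sub_apply, piKronecker_apply,
    smul_eq_mul, htildeBlock]
  ring

theorem Htilde_entries_general (m : ℕ) (α β : ℂ) (γ : Fin m → ℂ)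
    (hγ0 : ∀ k, γ k ≠ 0) (hγ1 : ∀ k, γ k ≠ 1)
    (hβ : ∀ i : Fin m → Fin 2, β ≠ ∏ k, γ k ^ (i k : ℕ))
    (I I' : Fin m → Fin 2) :
    (¬ (∀ k, (I k : ℕ) * (I' k : ℕ) = 0) →
      ((Pmat m γ)ᵀ * Matrix.diagonal (Hentry m α β γ) *
          Pmat m (fun k => (γ k)⁻¹)) I I'
        = (α * β + (-1 : ℂ) ^ (∑ k, (I k : ℕ) * (I' k : ℕ)) *
              ∏ k, γ k ^ ((I k : ℕ) * (I' k : ℕ))) /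
            ((α - ∏ k, γ k) * (β - 1)) *
            ∏ k, (-γ k) ^ ((I' k : ℕ) * (1 - (I k : ℕ))) *
              (1 - γ k) ^ ((1 - (I k : ℕ)) * (1 - (I' k : ℕ)))) ∧
    ((∀ k, (I k : ℕ) * (I' k : ℕ) = 0) →
      ((Pmat m γ)ᵀ * Matrix.diagonal (Hentry m α β γ) *
          Pmat m (fun k => (γ k)⁻¹)) I I'
        = (∏ k, (-γ k) ^ (I' k : ℕ) * (1 - γ k) ^ (1 - (I k : ℕ) - (I' k : ℕ))) *
            ((α - 1) / (α - ∏ k, γ k))) := by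
  refine ⟨fun h => ?_, fun h => ?_⟩
  · obtain ⟨k₀, hk₀⟩ := not_forall.mp h
    obtain ⟨hI, hI'⟩ := Nat.mul_ne_zero_iff.mp hk₀
    replace hI := Fin.eq_one_of_ne_zero _ (Fin.val_ne_zero_iff.mp hI)
    replace hI' := Fin.eq_one_of_ne_zero _ (Fin.val_ne_zero_iff.mp hI')
    have hB₁ : ∏ k, htildeBlock (γ k) 1 (I k) (I' k) = 0 :=
      Finset.prod_eq_zero (Finset.mem_univ k₀)
        (by rw [hI, hI', htildeBlock_one_apply_one_one (hγ0 k₀) (hγ1 k₀)])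
    rw [Htilde_apply, hB₁,
      Finset.prod_congr rfl fun k _ => htildeBlock_two_apply (hγ0 k) (hγ1 k) (I k) (I' k)]
    simp only [Finset.prod_mul_distrib]
    rw [Finset.prod_congr rfl fun k _ => htildeBlock_zero_apply (hγ0 k) (hγ1 k) (I k) (I' k)]
    simp only [Finset.prod_mul_distrib, Finset.prod_pow_eq_pow_sum]
    ring
  · have hβ₁ : β - 1 ≠ 0 := sub_ne_zero.mpr (by simpa using hβ 0)
    simp only [Htilde_apply, fun s k => htildeBlock_apply_of_mul_eq_zero (hγ0 k) (hγ1 k) s (h k)]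
    set X := ∏ k, (-γ k) ^ (I' k : ℕ) * (1 - γ k) ^ (1 - (I k : ℕ) - (I' k : ℕ))
    rw [show α * β * X - (α + β) * X + X = (α - 1) * X * (β - 1) by ring,
      mul_div_mul_right _ _ hβ₁]
    ring

/-- The entries of `H̃ = ᵗP_m H P_m^∨`: if `I·I' ≠ 0` then
`H̃_{I,I'} = (αβ + (-1)^{|I·I'|} ∏ γ_k^{i_k i'_k})/((α-∏γ_k)(β-1)) ·
∏ (-γ_k)^{i'_k(1-i_k)}(1-γ_k)^{(1-i_k)(1-i'_k)}`; if `I·I' = 0` then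
`H̃_{I,I'} = ∏ (-γ_k)^{i'_k}(1-γ_k)^{1-i_k-i'_k} · (α-1)/(α-∏γ_k)`.
In particular no denominator involves a factor `γ_k - 1`. -/
theorem Htilde_entries (m : ℕ) (α β : ℂ) (γ : Fin m → ℂ)
    (hγ0 : ∀ k, γ k ≠ 0) (hγ1 : ∀ k, γ k ≠ 1)
    (hα : ∀ i : Fin m → Fin 2, α ≠ ∏ k, γ k ^ (i k : ℕ))
    (hβ : ∀ i : Fin m → Fin 2, β ≠ ∏ k, γ k ^ (i k : ℕ))
    (I I' : Fin m → Fin 2) :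
    (¬ (∀ k, (I k : ℕ) * (I' k : ℕ) = 0) →
      ((Pmat m γ)ᵀ * Matrix.diagonal (Hentry m α β γ) *
          Pmat m (fun k => (γ k)⁻¹)) I I'
        = (α * β + (-1 : ℂ) ^ (∑ k, (I k : ℕ) * (I' k : ℕ)) *
              ∏ k, γ k ^ ((I k : ℕ) * (I' k : ℕ))) /
            ((α - ∏ k, γ k) * (β - 1)) *
            ∏ k, (-γ k) ^ ((I' k : ℕ) * (1 - (I k : ℕ))) *
              (1 - γ k) ^ ((1 - (I k : ℕ)) * (1 - (I' k : ℕ)))) ∧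
    ((∀ k, (I k : ℕ) * (I' k : ℕ) = 0) →
      ((Pmat m γ)ᵀ * Matrix.diagonal (Hentry m α β γ) *
          Pmat m (fun k => (γ k)⁻¹)) I I'
        = (∏ k, (-γ k) ^ (I' k : ℕ) * (1 - γ k) ^ (1 - (I k : ℕ) - (I' k : ℕ))) *
            ((α - 1) / (α - ∏ k, γ k))) :=
  Htilde_entries_general m α β γ hγ0 hγ1 hβ I I'
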